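/- Let b > 1/4. Then sup over all n ∈ ℤ and τ ∈ ℝ of the sum Σ_{n₁ ∈ ℤ} 1 / (1 + |τ + n² + 2n₁² − 2n·n₁|)^{2b} is finite. -/
import Mathlib

open scoped ENNReal

lemma aux_summable (b : ℝ) (hb : 1 / 4 < b) :
    Summable (fun k : ℕ => 1 / (1 + 2 * (k : ℝ) ^ 2) ^ (2 * b)) := by
  have h4b : (1 : ℝ) < 4 * b := by linarith
  have hsum : Summable (fun k : ℕ => 1 / ((k : ℝ) + 1) ^ (4 * b)) := by
    have h := (Real.summable_one_div_nat_rpow (p := 4 * b)).2 h4b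
    have h2 := (summable_nat_add_iff 1).2 h
    simpa using h2
  refine Summable.of_nonneg_of_le (fun k => by positivity) (fun k => ?_)
    (hsum.mul_left ((2:ℝ) ^ (2 * b)))
  have hk1 : (0:ℝ) ≤ (k:ℝ) + 1 := by positivity
  have hbase : ((k:ℝ) + 1) ^ (4 * b) ≤ (2:ℝ) ^ (2*b) * (1 + 2 * (k : ℝ) ^ 2) ^ (2 * b) := by
    have key : ((k:ℝ) + 1) ^ 2 ≤ 2 * (1 + 2 * (k : ℝ) ^ 2) := by nlinarith [sq_nonneg ((k:ℝ) - 1)]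
    calc ((k:ℝ) + 1) ^ (4 * b) = (((k:ℝ) + 1) ^ (2:ℕ)) ^ (2 * b) := by
          rw [← Real.rpow_natCast ((k:ℝ)+1) 2, ← Real.rpow_mul hk1]; norm_num; ring_nf
      _ ≤ (2 * (1 + 2 * (k : ℝ) ^ 2)) ^ (2 * b) := by
          apply Real.rpow_le_rpow (by positivity) key (by linarith)
      _ = (2:ℝ) ^ (2*b) * (1 + 2 * (k : ℝ) ^ 2) ^ (2 * b) := by
          rw [Real.mul_rpow (by norm_num) (by positivity)]
  rw [show (2:ℝ)^(2*b) * (1/((k:ℝ)+1)^(4*b)) = (2:ℝ)^(2*b)/((k:ℝ)+1)^(4*b) from mul_one_div _ _]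
  rw [div_le_div_iff₀ (by positivity) (by positivity)]
  nlinarith [hbase]

/-- For `b > 1/4`, `sup_{n ∈ ℤ, τ ∈ ℝ} Σ_{n₁ ∈ ℤ} 1 / (1 + |τ + n² + 2n₁² − 2nn₁|)^{2b} < ∞`. -/
theorem stmt_3 (b : ℝ) (hb : 1 / 4 < b) :
    (⨆ (n : ℤ) (τ : ℝ), ∑' n₁ : ℤ,
      ENNReal.ofReal
        (1 / (1 + |τ + ((n ^ 2 + 2 * n₁ ^ 2 - 2 * n * n₁ : ℤ) : ℝ)|) ^ (2 * b))) < ⊤ := by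
  have hb0 : (0:ℝ) ≤ 2 * b := by linarith
  set C : ℝ≥0∞ := ∑' k : ℕ, ENNReal.ofReal (1 / (1 + 2 * (k : ℝ) ^ 2) ^ (2 * b)) with hCdef
  have hC : C ≠ ⊤ := by
    rw [hCdef, ← ENNReal.ofReal_tsum_of_nonneg (fun k => by positivity) (aux_summable b hb)]
    exact ENNReal.ofReal_ne_top
  have h4C : 4 * C < ⊤ := ENNReal.mul_lt_top (by norm_num) hC.lt_top
  refine lt_of_le_of_lt (iSup_le fun n => iSup_le fun τ => ?_) h4C
  set s : ℝ := τ + (n:ℝ)^2 / 2 with hs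
  set r : ℝ := Real.sqrt (max (-s) 0 / 2) with hrdef
  have hr0 : 0 ≤ r := Real.sqrt_nonneg _
  have hr2 : 2 * r ^ 2 = max (-s) 0 := by
    rw [hrdef, Real.sq_sqrt (by positivity)]; ring
  set x : ℤ → ℝ := fun n₁ => (n₁ : ℝ) - (n : ℝ) / 2 with hx
  set d : ℤ → ℝ := fun n₁ => |(|x n₁| - r)| with hd
  have hd0 : ∀ n₁, 0 ≤ d n₁ := fun n₁ => abs_nonneg _
  set g : ℤ → ℕ := fun n₁ => ⌊d n₁⌋₊ with hg
  have hglb : ∀ n₁, (g n₁ : ℝ) ≤ d n₁ := fun n₁ => Nat.floor_le (hd0 n₁)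
  have hgub : ∀ n₁, d n₁ < g n₁ + 1 := fun n₁ => Nat.lt_floor_add_one _
  have key : ∀ n₁ : ℤ, 2 * (g n₁ : ℝ)^2 ≤ |τ + ((n ^ 2 + 2 * n₁ ^ 2 - 2 * n * n₁ : ℤ) : ℝ)| := by
    intro n₁
    have hsum : τ + ((n ^ 2 + 2 * n₁ ^ 2 - 2 * n * n₁ : ℤ) : ℝ) = s + 2 * (x n₁)^2 := by
      rw [hs, hx]; push_cast; ring
    rw [hsum]
    have hxx : (x n₁)^2 = |x n₁|^2 := (sq_abs _).symm
    have hdd : d n₁ = |(|x n₁| - r)| := by rw [hd]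
    have hdle : 2 * (d n₁)^2 ≤ |s + 2 * (x n₁)^2| := by
      rcases le_or_gt 0 s with hsle | hslt
      · have hrz : r = 0 := by
          have : 2 * r ^ 2 = 0 := by rw [hr2, max_eq_right (by linarith)]
          nlinarith [sq_nonneg r]
        rw [hdd, hrz]
        have h1 : s + 2 * (x n₁)^2 ≤ |s + 2 * (x n₁)^2| := le_abs_self _
        have h2 : |(|x n₁| - 0)| = |x n₁| := by rw [sub_zero, abs_abs]
        rw [h2]; nlinarith [sq_abs (x n₁)]
      · have hmax : max (-s) 0 = -s := max_eq_left (by linarith)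
        have hr2' : 2 * r ^ 2 = -s := by rw [hr2, hmax]
        rcases le_or_gt r (|x n₁|) with hcase | hcase
        · have hda : d n₁ = |x n₁| - r := by rw [hdd, abs_of_nonneg (by linarith)]
          have h1 : s + 2 * (x n₁)^2 ≤ |s + 2 * (x n₁)^2| := le_abs_self _
          rw [hda]; nlinarith [sq_abs (x n₁), abs_nonneg (x n₁)]
        · have hda : d n₁ = r - |x n₁| := by
            rw [hdd, abs_of_neg (by linarith), neg_sub]
          have h1 : -(s + 2 * (x n₁)^2) ≤ |s + 2 * (x n₁)^2| := neg_le_abs _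
          rw [hda]; nlinarith [sq_abs (x n₁), abs_nonneg (x n₁)]
    have hgd : (g n₁ : ℝ)^2 ≤ (d n₁)^2 := by
      have := hglb n₁; nlinarith [Nat.cast_nonneg (α := ℝ) (g n₁)]
    linarith
  have step1 : ∀ n₁ : ℤ,
      ENNReal.ofReal (1 / (1 + |τ + ((n ^ 2 + 2 * n₁ ^ 2 - 2 * n * n₁ : ℤ) : ℝ)|) ^ (2 * b)) ≤
      ENNReal.ofReal (1 / (1 + 2 * (g n₁ : ℝ)^2) ^ (2 * b)) := by
    intro n₁
    apply ENNReal.ofReal_le_ofReal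
    apply one_div_le_one_div_of_le (by positivity)
    exact Real.rpow_le_rpow (by positivity) (by linarith [key n₁]) hb0
  have hj : Function.Injective (fun n₁ : ℤ =>
      ((g n₁, decide (0 ≤ x n₁), decide (r ≤ |x n₁|)) : ℕ × Bool × Bool)) := by
    intro a c h
    simp only [Prod.mk.injEq, decide_eq_decide] at h
    obtain ⟨hgac, hsign, hside⟩ := h
    have hdb : |d a - d c| < 1 := by
      have h1 := hglb a; have h2 := hgub a; have h3 := hglb c; have h4 := hgub c
      rw [hgac] at h1 h2
      rw [abs_lt]; constructor <;> linarith
    have hu : |(|x a| - |x c|)| < 1 := by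
      by_cases hra : r ≤ |x a|
      · have hrc : r ≤ |x c| := hside.mp hra
        have hda : d a = |x a| - r := by rw [hd]; exact abs_of_nonneg (by linarith)
        have hdc : d c = |x c| - r := by rw [hd]; exact abs_of_nonneg (by linarith)
        rw [hda, hdc] at hdb
        have : |x a| - r - (|x c| - r) = |x a| - |x c| := by ring
        rwa [this] at hdb
      · have hrc : ¬ r ≤ |x c| := fun hc => hra (hside.mpr hc)
        push_neg at hra hrc
        have hda : d a = r - |x a| := by
          rw [hd]; exact (abs_of_neg (show |x a| - r < 0 by linarith)).trans (neg_sub _ _)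
        have hdc : d c = r - |x c| := by
          rw [hd]; exact (abs_of_neg (show |x c| - r < 0 by linarith)).trans (neg_sub _ _)
        rw [hda, hdc] at hdb
        have : r - |x a| - (r - |x c|) = -(|x a| - |x c|) := by ring
        rw [this, abs_neg] at hdb
        exact hdb
    have hxac : |x a - x c| < 1 := by
      by_cases hpa : 0 ≤ x a
      · have hpc : 0 ≤ x c := hsign.mp hpa
        rwa [abs_of_nonneg hpa, abs_of_nonneg hpc] at hu
      · have hpc : ¬ 0 ≤ x c := fun hc => hpa (hsign.mpr hc)
        push_neg at hpa hpc
        rw [abs_of_neg hpa, abs_of_neg hpc] at hu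
        have : -x a - -x c = -(x a - x c) := by ring
        rwa [this, abs_neg] at hu
    have hcast : x a - x c = ((a - c : ℤ) : ℝ) := by rw [hx]; push_cast; ring
    rw [hcast] at hxac
    by_contra hne
    have h1 : (1:ℤ) ≤ |a - c| := Int.one_le_abs (sub_ne_zero.mpr hne)
    have h2 : (1:ℝ) ≤ |((a - c : ℤ) : ℝ)| := by exact_mod_cast h1
    linarith
  calc (∑' n₁ : ℤ, ENNReal.ofReal
        (1 / (1 + |τ + ((n ^ 2 + 2 * n₁ ^ 2 - 2 * n * n₁ : ℤ) : ℝ)|) ^ (2 * b)))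
      ≤ ∑' n₁ : ℤ, (fun p : ℕ × Bool × Bool =>
          ENNReal.ofReal (1 / (1 + 2 * (p.1 : ℝ)^2) ^ (2 * b)))
          ((g n₁, decide (0 ≤ x n₁), decide (r ≤ |x n₁|)) : ℕ × Bool × Bool) :=
        ENNReal.tsum_le_tsum step1
    _ ≤ ∑' p : ℕ × Bool × Bool, ENNReal.ofReal (1 / (1 + 2 * (p.1 : ℝ)^2) ^ (2 * b)) :=
        ENNReal.tsum_comp_le_tsum_of_injective hj _
    _ = 4 * C := by
        rw [ENNReal.tsum_prod']
        have hinner : ∀ a : ℕ, (∑' _ : Bool × Bool,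
            ENNReal.ofReal (1 / (1 + 2 * (a : ℝ)^2) ^ (2 * b))) =
            4 * ENNReal.ofReal (1 / (1 + 2 * (a : ℝ)^2) ^ (2 * b)) := by
          intro a
          rw [tsum_fintype]
          simp [Finset.sum_const, Finset.card_univ]
        simp only [hinner]
        rw [ENNReal.tsum_mul_left]
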